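/- arXiv:1001.2940 — 2 statements merged into one kernel-verified Lean document; each statement's English description precedes it below -/
import Mathlib

section
/- For a nonzero polynomial P over the integers, the Mahler measure of P is at most the 2-norm of P (Landau's inequality), and hence at most the 1-norm of P. -/
/-!
Map `P` to `ℂ[X]`: both the Mahler measure and the 2-norm are unchanged, and for complex
polynomials Landau's inequality is Mathlib's `Polynomial.mahlerMeasure_le_sqrt_sum_sq_norm_coeff`
(Jensen's inequality for `log |P|` on the unit circle, then Parseval). The 1-norm bound follows
since `∑ aᵢ² ≤ (∑ |aᵢ|)²`.
-/

open Polynomial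

/-- The 1-norm of an integer polynomial: the sum of absolute values of its coefficients. -/
noncomputable def norm1 (P : Polynomial ℤ) : ℝ :=
  ∑ i ∈ Finset.range (P.natDegree + 1), |(P.coeff i : ℝ)|

/-- The 2-norm of an integer polynomial. -/
noncomputable def norm2 (P : Polynomial ℤ) : ℝ :=
  Real.sqrt (∑ i ∈ Finset.range (P.natDegree + 1), ((P.coeff i : ℝ)) ^ 2)

/-- The Mahler measure of an integer polynomial: the absolute value of the leading
coefficient times the product of `max 1 |σ|` over all complex roots `σ`. -/
noncomputable def mahlerMeasure (P : Polynomial ℤ) : ℝ :=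
  |(P.leadingCoeff : ℝ)| *
    ((P.map (Int.castRingHom ℂ)).roots.map fun z => max 1 ‖z‖).prod

theorem mahlerMeasure_eq_mahlerMeasure_map (P : ℤ[X]) :
    mahlerMeasure P = (P.map (Int.castRingHom ℂ)).mahlerMeasure := by
  rw [Polynomial.mahlerMeasure_eq_leadingCoeff_mul_prod_roots,
    leadingCoeff_map_of_injective (RingHom.injective_int _), _root_.mahlerMeasure]
  simp

theorem norm2_eq_sqrt_sum_sq_norm_coeff_map (P : ℤ[X]) :
    norm2 P = √(∑ i ∈ (P.map (Int.castRingHom ℂ)).support,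
      ‖(P.map (Int.castRingHom ℂ)).coeff i‖ ^ 2) := by
  rw [norm2, support_map_of_injective _ (RingHom.injective_int _),
    ← Finset.sum_subset (supp_subset_range_natDegree_succ (p := P))]
  · simp
  · intro i _ hi
    simp [notMem_support_iff.mp hi]

theorem norm2_le_norm1 (P : ℤ[X]) : norm2 P ≤ norm1 P := by
  rw [norm2, norm1, Real.sqrt_le_left (Finset.sum_nonneg fun _ _ => abs_nonneg _)]
  simpa only [sq_abs] using
    Finset.sum_sq_le_sq_sum_of_nonneg (s := Finset.range (P.natDegree + 1))
      (f := fun i => |(P.coeff i : ℝ)|) fun _ _ => abs_nonneg _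

theorem landau_inequality_general (P : Polynomial ℤ) :
    mahlerMeasure P ≤ norm2 P ∧ mahlerMeasure P ≤ norm1 P := by
  have hle_norm2 : mahlerMeasure P ≤ norm2 P := by
    rw [mahlerMeasure_eq_mahlerMeasure_map, norm2_eq_sqrt_sum_sq_norm_coeff_map]
    exact mahlerMeasure_le_sqrt_sum_sq_norm_coeff _
  exact ⟨hle_norm2, hle_norm2.trans (norm2_le_norm1 P)⟩

/-- Landau's inequality: for a nonzero integer polynomial `P`, the Mahler measure of `P`
is at most `‖P‖₂`, and hence at most `‖P‖₁`. -/
theorem landau_inequality (P : Polynomial ℤ) (hP : P ≠ 0) :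
    mahlerMeasure P ≤ norm2 P ∧ mahlerMeasure P ≤ norm1 P :=
  landau_inequality_general P
end

section
/- If α is an algebraic number that is a root of a nonzero integer polynomial P, then the Mahler measure of α is at most ||P||₁. -/
open Polynomial

/-- The minimal primitive integer polynomial of an algebraic number `α`: the primitive part
of the integer normalization of its minimal polynomial over `ℚ`. -/
noncomputable def intMinpoly (α : ℂ) : Polynomial ℤ :=
  (IsLocalization.integerNormalization (nonZeroDivisors ℤ) (minpoly ℚ α)).primPart

/-- The Mahler measure of an algebraic number: the Mahler measure of its minimal
(primitive integer) polynomial over `ℚ`. -/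
noncomputable def mahlerAlg (α : ℂ) : ℝ := mahlerMeasure (intMinpoly α)

/-! By Gauss's lemma the primitive minimal polynomial of `α` divides `P`. The Mahler measure is
multiplicative and a nonzero integer polynomial has measure at least `|leading coefficient| ≥ 1`,
so among integer polynomials it is monotone under divisibility. Finally `M(P) ≤ ‖P‖₁` for every
complex polynomial: by Jensen's formula the product over the roots equals the geometric mean of
`|P|` on the unit circle, where `|P| ≤ ‖P‖₁`. -/

theorem Polynomial.map_primPart_integerNormalization_dvd {R K : Type*} [CommRing R] [IsDomain R]
    [NormalizedGCDMonoid R] [Field K] [Algebra R K] [IsFractionRing R K] (p : K[X]) :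
    (IsLocalization.integerNormalization (nonZeroDivisors R) p).primPart.map (algebraMap R K) ∣
      p := by
  obtain ⟨b, hb, hspec⟩ := IsLocalization.integerNormalization_spec (nonZeroDivisors R) p
  have hb0 : algebraMap R K b ≠ 0 := IsFractionRing.to_map_ne_zero_of_mem_nonZeroDivisors hb
  have h := Polynomial.map_dvd (algebraMap R K) (primPart_dvd
    (IsLocalization.integerNormalization (nonZeroDivisors R) p))
  rwa [hspec, Algebra.smul_def, Polynomial.algebraMap_apply,
    (isUnit_C.2 (isUnit_iff_ne_zero.2 hb0)).dvd_mul_left] at h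

theorem intMinpoly_dvd {α : ℂ} {P : ℤ[X]} (hroot : aeval α P = 0) : intMinpoly α ∣ P :=
  (isPrimitive_primPart _).dvd_of_fraction_map_dvd_fraction_map (K := ℚ) <|
    (map_primPart_integerNormalization_dvd _).trans <|
      minpoly.dvd ℚ α (by rwa [aeval_map_algebraMap])

theorem mahlerMeasure_eq_mapMahlerMeasure (P : ℤ[X]) :
    mahlerMeasure P = P.mapMahlerMeasure (Int.castRingHom ℂ) := by
  rw [mapMahlerMeasure_eq, mahlerMeasure_eq_leadingCoeff_mul_prod_roots, _root_.mahlerMeasure,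
    leadingCoeff_map_of_injective (RingHom.injective_int _)]
  simp

theorem norm1_eq_sum_norm_coeff (P : ℤ[X]) : norm1 P = P.sum fun _ a ↦ ‖a‖ := by
  rw [sum_over_range _ fun _ ↦ norm_zero, norm1]
  simp [Int.norm_eq_abs]

theorem Polynomial.mapMahlerMeasure_le_of_dvd {p q : ℤ[X]} (h : p ∣ q) (hq : q ≠ 0) :
    p.mapMahlerMeasure (Int.castRingHom ℂ) ≤ q.mapMahlerMeasure (Int.castRingHom ℂ) := by
  obtain ⟨r, rfl⟩ := h
  have hr : r ≠ 0 := right_ne_zero_of_mul hq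
  rw [mapMahlerMeasure_mul]
  refine le_mul_of_one_le_right (mapMahlerMeasure_nonneg _ _) ?_
  calc (1 : ℝ) ≤ ‖r.leadingCoeff‖ := by
        rw [Int.norm_eq_abs]; exact_mod_cast Int.one_le_abs (leadingCoeff_ne_zero.2 hr)
    _ ≤ _ := leadingCoeff_le_mapMahlerMeasure r _ Complex.isometry_intCast

theorem mahlerAlg_le_norm1_general (α : ℂ) (P : Polynomial ℤ)
    (hP : P ≠ 0) (hroot : Polynomial.aeval α P = 0) :
    mahlerAlg α ≤ norm1 P := by
  rw [mahlerAlg, mahlerMeasure_eq_mapMahlerMeasure, norm1_eq_sum_norm_coeff]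
  exact (mapMahlerMeasure_le_of_dvd (intMinpoly_dvd hroot) hP).trans
    (mapMahlerMeasure_le_sum_norm_coeff P _ Complex.isometry_intCast)

/-- If `α` is an algebraic number that is a root of a nonzero integer polynomial `P`,
then the Mahler measure of `α` is at most `‖P‖₁`. -/
theorem mahlerAlg_le_norm1 (α : ℂ) (hα : IsAlgebraic ℚ α) (P : Polynomial ℤ)
    (hP : P ≠ 0) (hroot : Polynomial.aeval α P = 0) :
    mahlerAlg α ≤ norm1 P :=
  mahlerAlg_le_norm1_general α P hP hroot
end
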